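/- Let A be a q×q integer matrix all of whose rows are congruent mod n to a fixed vector (l_1,...,l_q), and suppose m > 1 is a common factor of n and of every l_j (so that (1/m)A is an integer matrix). Then the linear n-valued map f_{n,A}: T^q → D_n(T^q) has a partition into m submaps, each an (n/m)-valued map which differs from the linear (n/m)-valued map f_{n/m,(1/m)A} by translation by a constant vector (r/n)c for some r ∈ {0,1,...,m−1}; in particular each of the m submaps is homotopic (through (n/m)-valued maps) to f_{n/m,(1/m)A}. -/

import Mathlib

open Function Set

/-- The ordered configuration space of `n` points in `Y`. -/
def OrdConf (n : ℕ) (Y : Type*) [TopologicalSpace Y] : Type _ :=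
  {y : Fin n → Y // Function.Injective y}

instance (n : ℕ) (Y : Type*) [TopologicalSpace Y] : TopologicalSpace (OrdConf n Y) :=
  instTopologicalSpaceSubtype

/-- Two ordered configurations are equivalent when they differ by a permutation. -/
def confSetoid (n : ℕ) (Y : Type*) [TopologicalSpace Y] : Setoid (OrdConf n Y) where
  r a b := ∃ σ : Equiv.Perm (Fin n), a.1 ∘ σ = b.1
  iseqv := by
    constructor
    · intro a; exact ⟨Equiv.refl _, rfl⟩
    · rintro a b ⟨σ, h⟩
      refine ⟨σ.symm, funext fun i => ?_⟩
      have := congrFun h (σ.symm i)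
      simpa using this.symm
    · rintro a b c ⟨σ, h1⟩ ⟨τ, h2⟩
      refine ⟨τ.trans σ, funext fun i => ?_⟩
      have h1' := congrFun h1 (τ i)
      have h2' := congrFun h2 i
      simp only [Function.comp_apply] at h1' h2' ⊢
      simp [Equiv.trans_apply, h1', h2']

/-- The unordered configuration space `D_n(Y)` of `n` points in `Y`,
with the quotient topology. -/
def UnordConf (n : ℕ) (Y : Type*) [TopologicalSpace Y] : Type _ :=
  Quotient (confSetoid n Y)

instance (n : ℕ) (Y : Type*) [TopologicalSpace Y] : TopologicalSpace (UnordConf n Y) :=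
  instTopologicalSpaceQuotient

/-- The underlying `n`-element subset of `Y` determined by an unordered configuration. -/
def UnordConf.values {n : ℕ} {Y : Type*} [TopologicalSpace Y] : UnordConf n Y → Set Y :=
  Quotient.lift (fun a => Set.range a.1) (by
    rintro a b ⟨σ, h⟩
    show Set.range a.1 = Set.range b.1
    rw [← h, Set.range_comp]
    simp)

/-- An `n`-valued map from `X` to `Y` is a continuous map `X → D_n(Y)`. -/
abbrev NValuedMap (X Y : Type*) [TopologicalSpace X] [TopologicalSpace Y] (n : ℕ) :=
  C(X, UnordConf n Y)

/-- `g` is a submap of `f` when `g(x) ⊆ f(x)` for all `x`. -/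
def IsSubmap {X Y : Type*} [TopologicalSpace X] [TopologicalSpace Y] {k n : ℕ}
    (g : NValuedMap X Y k) (f : NValuedMap X Y n) : Prop :=
  ∀ x : X, (g x).values ⊆ (f x).values

/-- An `n`-valued map is irreducible when it admits no proper (`k`-valued, `0 < k < n`) submap. -/
def IsIrreducibleNV {X Y : Type*} [TopologicalSpace X] [TopologicalSpace Y] {n : ℕ}
    (f : NValuedMap X Y n) : Prop :=
  ¬ ∃ (k : ℕ) (g : NValuedMap X Y k), 0 < k ∧ k < n ∧ IsSubmap g f

/-- A partition of an `n`-valued map `f` into `l` multimaps: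
a family of `kᵢ`-valued maps with `k₁ + ⋯ + k_l = n` whose values unite to those of `f`. -/
structure NVPartition {X Y : Type*} [TopologicalSpace X] [TopologicalSpace Y] {n : ℕ}
    (f : NValuedMap X Y n) (l : ℕ) where
  card : Fin l → ℕ
  card_pos : ∀ i, 0 < card i
  maps : ∀ i, NValuedMap X Y (card i)
  sum_card : ∑ i, card i = n
  values_eq : ∀ x : X, (f x).values = ⋃ i, UnordConf.values ((maps i) x)

/-- A partition is into irreducibles when every member is irreducible. -/
def NVPartition.IsIrreduciblePartition {X Y : Type*} [TopologicalSpace X] [TopologicalSpace Y]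
    {n : ℕ} {f : NValuedMap X Y n} {l : ℕ} (P : NVPartition f l) : Prop :=
  ∀ i, IsIrreducibleNV (P.maps i)

/-- A space is a (compact) finite polyhedron when it is homeomorphic to the underlying
space of a finite simplicial complex in some Euclidean space. -/
def IsFinitePolyhedron (X : Type*) [TopologicalSpace X] : Prop :=
  ∃ (N : ℕ) (K : Geometry.SimplicialComplex ℝ (EuclideanSpace ℝ (Fin N))),
    K.faces.Finite ∧ Nonempty (X ≃ₜ K.space)

/-- The `q`-torus `ℝ^q/ℤ^q`. -/
abbrev Torus (q : ℕ) := Fin q → AddCircle (1 : ℝ)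

/-- The universal covering projection `ℝ^q → T^q`, `t ↦ t mod 1`. -/
noncomputable def torusProj {q : ℕ} (t : Fin q → ℝ) : Torus q := fun i => (t i : AddCircle (1 : ℝ))

/-- The affine lift `f^k_{n,A}(t) = (1/n)(At + k·c)`, where `c = (1,…,1)`. -/
noncomputable def linLift {q : ℕ} (n : ℕ) (A : Matrix (Fin q) (Fin q) ℤ) (k : ℤ) (t : Fin q → ℝ) :
    Fin q → ℝ :=
  fun i => (1 / (n : ℝ)) * ((A.map (Int.cast : ℤ → ℝ)).mulVec t i + (k : ℝ))

/-- `f` is (a representative of) the linear `n`-valued torus map `f_{n,A}` induced by `A`: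
its value at `p^q(t)` is `{p^q(f^1_{n,A}(t)), …, p^q(f^n_{n,A}(t))}`. -/
def IsLinearNV {q : ℕ} (n : ℕ) (A : Matrix (Fin q) (Fin q) ℤ)
    (f : NValuedMap (Torus q) (Torus q) n) : Prop :=
  ∀ t : Fin q → ℝ,
    UnordConf.values (f (torusProj t)) =
      Set.range fun k : Fin n => torusProj (linLift n A ((k : ℕ) + 1) t)

/-- `f` has a proper partition: a partition into at least two multimaps. -/
def HasProperPartition {X Y : Type*} [TopologicalSpace X] [TopologicalSpace Y] {n : ℕ}
    (f : NValuedMap X Y n) : Prop :=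
  ∃ l : ℕ, 2 ≤ l ∧ Nonempty (NVPartition f l)

/-!
Let `p` be the covering `ℝ^q → T^q` and let the lift index `k` range over all of `ℤ`. The point
`p(f^k_{n,A}(t))` only depends on `k mod n`, and replacing `t` by `t + v` with `v ∈ ℤ^q` replaces
`k` by `k + l·v`, because every row of `A` is `l` mod `n`. Hence the set of all these points,
shifted by `c·(1,…,1)`, is an `n`-valued function of `(c, p t)`, continuous in both variables.
If `A = m A'` and `n = m n'`, then `f^{m k + r}_{n,A} = f^k_{n',A'} + (r/n)·(1,…,1)`, so sorting
the indices `k` by their residue `r` mod `m` partitions `f_{n,A}` into the maps with shifts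
`c = r/n`, and moving `c` to `0` is a homotopy from each of them to `f_{n',A'}`.
-/

open Matrix Topology

theorem Int.ModEq.ediv_of_dvd {a b c n : ℤ} (h : a ≡ b [ZMOD n]) (hcn : c ∣ n) (hca : c ∣ a)
    (hcb : c ∣ b) : a / c ≡ b / c [ZMOD n / c] := by
  rcases eq_or_ne c 0 with rfl | hc
  · simp only [Int.ediv_zero, Int.ModEq.refl]
  obtain ⟨a, rfl⟩ := hca
  obtain ⟨b, rfl⟩ := hcb
  obtain ⟨n, rfl⟩ := hcn
  simpa only [Int.mul_ediv_cancel_left _ hc] using Int.ModEq.mul_left_cancel' hc h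

theorem ContinuousMap.homotopic_curry {X Y : Type*} [TopologicalSpace X] [TopologicalSpace Y]
    (F : C(ℝ × X, Y)) (a b : ℝ) : (F.curry a).Homotopic (F.curry b) :=
  ⟨{ toFun := fun p => F (a + (p.1 : ℝ) * (b - a), p.2)
     continuous_toFun := by fun_prop
     map_zero_left := fun x => by simp
     map_one_left := fun x => by simp }⟩

theorem Function.Injective.exists_perm_comp_eq_of_range_eq {n : ℕ} {Y : Type*}
    {a b : Fin n → Y} (ha : Injective a) (hb : Injective b) (h : range a = range b) :
    ∃ σ : Equiv.Perm (Fin n), a ∘ σ = b :=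
  ⟨(Equiv.ofInjective b hb).trans ((Equiv.setCongr h.symm).trans (Equiv.ofInjective a ha).symm),
    funext fun i => by simp [Equiv.apply_ofInjective_symm ha]⟩

namespace UnordConf

variable {n : ℕ} {Y : Type*} [TopologicalSpace Y]

theorem values_injective : Injective (values : UnordConf n Y → Set Y) := by
  rintro ⟨a⟩ ⟨b⟩ h
  exact Quotient.sound (Injective.exists_perm_comp_eq_of_range_eq a.2 b.2 h)

theorem isEmpty_of_subsingleton [Subsingleton Y] (hn : 2 ≤ n) : IsEmpty (UnordConf n Y) := by
  refine ⟨fun x => ?_⟩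
  induction x using Quotient.ind with | _ a
  have := a.2 (Subsingleton.elim (a.1 ⟨0, by omega⟩) (a.1 ⟨1, by omega⟩))
  simp [Fin.ext_iff] at this

end UnordConf

section Torus

variable {q : ℕ}

theorem AddCircle.coe_add_intCast (x : ℝ) (k : ℤ) : ((x + k : ℝ) : AddCircle (1 : ℝ)) = x := by
  rw [AddCircle.coe_add, add_eq_left, AddCircle.coe_eq_zero_iff]
  exact ⟨k, by simp⟩

theorem torusProj_add_intCast (t : Fin q → ℝ) (v : Fin q → ℤ) :
    torusProj (fun a => t a + v a) = torusProj t :=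
  funext fun a => AddCircle.coe_add_intCast (t a) (v a)

theorem torusProj_eq_iff {t t' : Fin q → ℝ} :
    torusProj t = torusProj t' ↔ ∃ v : Fin q → ℤ, ∀ a, t' a = t a + v a := by
  refine ⟨fun h => ?_, fun ⟨v, hv⟩ => ?_⟩
  · have (a : Fin q) : ∃ k : ℤ, t' a = t a + k := by
      obtain ⟨k, hk⟩ := QuotientAddGroup.eq_iff_sub_mem.mp (congrFun h a)
      exact ⟨-k, by simp only [zsmul_eq_mul, mul_one] at hk; push_cast; linarith⟩
    exact ⟨fun a => (this a).choose, fun a => (this a).choose_spec⟩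
  · rw [funext hv, torusProj_add_intCast]

theorem torusProj_surjective : Surjective (torusProj (q := q)) :=
  fun x => ⟨fun a => (QuotientAddGroup.mk_surjective (x a)).choose,
    funext fun a => (QuotientAddGroup.mk_surjective (x a)).choose_spec⟩

theorem isOpenQuotientMap_torusProj : IsOpenQuotientMap (torusProj (q := q)) :=
  IsOpenQuotientMap.piMap fun _ => QuotientAddGroup.isOpenQuotientMap_mk

end Torus

theorem Matrix.mulVec_modEq_dotProduct {κ ι : Type*} [Fintype ι] {n : ℤ} {A : Matrix κ ι ℤ}
    {l : ι → ℤ} (hrow : ∀ i j, A i j ≡ l j [ZMOD n]) (v : ι → ℤ) (i : κ) :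
    (A *ᵥ v) i ≡ l ⬝ᵥ v [ZMOD n] :=
  Int.ModEq.sum fun j _ => (hrow i j).mul_right _

section LinearConfiguration

variable {q n : ℕ} {A : Matrix (Fin q) (Fin q) ℤ} {l : Fin q → ℤ}

noncomputable def linPoint (n : ℕ) (A : Matrix (Fin q) (Fin q) ℤ) (c : ℝ) (t : Fin q → ℝ)
    (k : ℤ) : Torus q :=
  torusProj fun a => linLift n A k t a + c

theorem linPoint_zero_shift (t : Fin q → ℝ) (k : ℤ) :
    linPoint n A 0 t k = torusProj (linLift n A k t) := by
  simp only [linPoint, add_zero]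

theorem linPoint_add_mul (hn : n ≠ 0) (c : ℝ) (t : Fin q → ℝ) (k j : ℤ) :
    linPoint n A c t (k + n * j) = linPoint n A c t k := by
  rw [linPoint, linPoint, ← torusProj_add_intCast (fun a => linLift n A k t a + c) (fun _ => j)]
  congr 1
  funext a
  simp only [linLift]
  field_simp
  push_cast
  ring

theorem modEq_of_linPoint_eq (hq : 0 < q) (hn : n ≠ 0) {c : ℝ} {t : Fin q → ℝ} {k k' : ℤ}
    (h : linPoint n A c t k = linPoint n A c t k') : k ≡ k' [ZMOD n] := by
  obtain ⟨v, hv⟩ := torusProj_eq_iff.mp h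
  have hv₀ := hv ⟨0, hq⟩
  simp only [linLift] at hv₀
  field_simp at hv₀
  refine Int.modEq_iff_dvd.mpr ⟨v ⟨0, hq⟩, ?_⟩
  exact_mod_cast (by linarith : (k' : ℝ) - k = n * v ⟨0, hq⟩)

theorem injective_linPoint_fin (hq : 0 < q) (c : ℝ) (t : Fin q → ℝ) :
    Injective fun s : Fin n => linPoint n A c t ((s : ℕ) + 1) := by
  intro s s' h
  have hn : n ≠ 0 := s.pos.ne'
  have hdvd := (modEq_of_linPoint_eq hq hn h).dvd
  have := Int.eq_zero_of_abs_lt_dvd hdvd (by rw [abs_lt]; omega)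
  exact Fin.ext (by omega)

theorem range_linPoint_fin (hn : n ≠ 0) (c : ℝ) (t : Fin q → ℝ) :
    range (fun s : Fin n => linPoint n A c t ((s : ℕ) + 1)) = range (linPoint n A c t) := by
  refine Subset.antisymm (range_subset_iff.mpr fun s => mem_range_self _) ?_
  rintro _ ⟨k, rfl⟩
  have hmod := Int.emod_nonneg (k - 1) (Int.natCast_ne_zero.mpr hn)
  have hlt := Int.emod_lt_of_pos (k - 1) (by omega : (0 : ℤ) < n)
  refine ⟨⟨((k - 1) % n).toNat, by omega⟩, ?_⟩
  have key : (((k - 1) % n).toNat : ℤ) + 1 + n * ((k - 1) / n) = k := by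
    have := Int.mul_ediv_add_emod (k - 1) n
    omega
  dsimp only
  rw [← linPoint_add_mul hn c t _ ((k - 1) / n), key]

theorem linPoint_add_intCast (hn : n ≠ 0) (hrow : ∀ i j, A i j ≡ l j [ZMOD n]) (c : ℝ)
    (t : Fin q → ℝ) (v : Fin q → ℤ) (k : ℤ) :
    linPoint n A c (fun a => t a + v a) k = linPoint n A c t (k + l ⬝ᵥ v) := by
  have hcong (a : Fin q) : ∃ z : ℤ, l ⬝ᵥ v = (A *ᵥ v) a + n * z := by
    obtain ⟨z, hz⟩ := (Matrix.mulVec_modEq_dotProduct hrow v a).dvd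
    exact ⟨z, by linarith⟩
  choose z hz using hcong
  rw [linPoint, linPoint, ← torusProj_add_intCast _ z]
  congr 1
  funext a
  have hmul : (A.map (Int.cast : ℤ → ℝ) *ᵥ fun a => (v a : ℝ)) a = ((A *ᵥ v) a : ℤ) :=
    (RingHom.map_mulVec (Int.castRingHom ℝ) A v a).symm
  have hadd : (fun a => t a + (v a : ℝ)) = t + fun a => (v a : ℝ) := rfl
  simp only [linLift, hadd, Matrix.mulVec_add, Pi.add_apply, hmul, hz a]
  push_cast
  field_simp
  ring

theorem range_linPoint_eq_of_torusProj_eq (hn : n ≠ 0) (hrow : ∀ i j, A i j ≡ l j [ZMOD n])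
    (c : ℝ) {t t' : Fin q → ℝ} (h : torusProj t = torusProj t') :
    range (linPoint n A c t) = range (linPoint n A c t') := by
  obtain ⟨v, hv⟩ := torusProj_eq_iff.mp h
  rw [funext hv, funext (linPoint_add_intCast hn hrow c t v)]
  exact ((Equiv.addRight (l ⬝ᵥ v)).surjective.range_comp _).symm

theorem linPoint_eq_linPoint_mul_add {m n' : ℕ} {A' : Matrix (Fin q) (Fin q) ℤ} (hm : m ≠ 0)
    (hn' : n' ≠ 0) (hnm : n = m * n') (hA : A = (m : ℤ) • A') (t : Fin q → ℝ) (k : ℤ) (r : ℕ) :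
    linPoint n' A' (r / n) t k = linPoint n A 0 t (m * k + r) := by
  rw [linPoint, linPoint]
  congr 1
  funext a
  have hmul : (A.map (Int.cast : ℤ → ℝ) *ᵥ t) a = m * (A'.map (Int.cast : ℤ → ℝ) *ᵥ t) a := by
    simp only [hA, Matrix.mulVec, dotProduct, Matrix.map_apply, Matrix.smul_apply, smul_eq_mul,
      Finset.mul_sum]
    exact Finset.sum_congr rfl fun j _ => by push_cast; ring
  simp only [linLift, hnm, hmul]
  push_cast
  field_simp
  ring

theorem range_linPoint_eq_iUnion {m n' : ℕ} {A' : Matrix (Fin q) (Fin q) ℤ} (hm : m ≠ 0)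
    (hn' : n' ≠ 0) (hnm : n = m * n') (hA : A = (m : ℤ) • A') (t : Fin q → ℝ) :
    range (linPoint n A 0 t) = ⋃ r : Fin m, range (linPoint n' A' ((r : ℕ) / n) t) := by
  ext x
  simp only [mem_iUnion, mem_range]
  constructor
  · rintro ⟨k, rfl⟩
    have hmod := Int.emod_nonneg k (Int.natCast_ne_zero.mpr hm)
    have hlt := Int.emod_lt_of_pos k (by omega : (0 : ℤ) < m)
    refine ⟨⟨(k % m).toNat, by omega⟩, k / m, ?_⟩
    rw [linPoint_eq_linPoint_mul_add hm hn' hnm hA]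
    have := Int.mul_ediv_add_emod k m
    congr 1
    dsimp only
    omega
  · rintro ⟨r, k, rfl⟩
    exact ⟨_, (linPoint_eq_linPoint_mul_add hm hn' hnm hA t k r).symm⟩

noncomputable def linConf (hq : 0 < q) (n : ℕ) (A : Matrix (Fin q) (Fin q) ℤ) (c : ℝ)
    (t : Fin q → ℝ) : OrdConf n (Torus q) :=
  ⟨fun s => linPoint n A c t ((s : ℕ) + 1), injective_linPoint_fin hq c t⟩

theorem continuous_linConf (hq : 0 < q) :
    Continuous fun p : ℝ × (Fin q → ℝ) => linConf hq n A p.1 p.2 := by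
  refine Continuous.subtype_mk (continuous_pi fun s => continuous_pi fun a => ?_) _
  refine continuous_quot_mk.comp ?_
  simp only [linLift]
  fun_prop

noncomputable def torusCover : C(ℝ × (Fin q → ℝ), ℝ × Torus q) :=
  (ContinuousMap.id ℝ).prodMap ⟨torusProj, isOpenQuotientMap_torusProj.continuous⟩

theorem isQuotientMap_torusCover : IsQuotientMap (torusCover (q := q)) :=
  (IsOpenQuotientMap.id.prodMap isOpenQuotientMap_torusProj).isQuotientMap

noncomputable def linConfMap (hq : 0 < q) (n : ℕ) (A : Matrix (Fin q) (Fin q) ℤ) :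
    C(ℝ × (Fin q → ℝ), UnordConf n (Torus q)) :=
  ⟨fun p => Quotient.mk _ (linConf hq n A p.1 p.2),
    continuous_quot_mk.comp (continuous_linConf hq)⟩

theorem factorsThrough_linConfMap (hq : 0 < q) (hn : n ≠ 0)
    (hrow : ∀ i j, A i j ≡ l j [ZMOD n]) :
    FactorsThrough (linConfMap hq n A) torusCover := by
  rintro ⟨c, t⟩ ⟨c', t'⟩ h
  obtain ⟨rfl, h⟩ := Prod.ext_iff.mp h
  apply UnordConf.values_injective
  exact (range_linPoint_fin hn c t).trans <|
    (range_linPoint_eq_of_torusProj_eq hn hrow c h).trans (range_linPoint_fin hn c t').symm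

noncomputable def shiftedLinearNV (hq : 0 < q) (hn : n ≠ 0)
    (hrow : ∀ i j, A i j ≡ l j [ZMOD n]) :
    C(ℝ × Torus q, UnordConf n (Torus q)) :=
  isQuotientMap_torusCover.lift (linConfMap hq n A) (factorsThrough_linConfMap hq hn hrow)

theorem values_shiftedLinearNV (hq : 0 < q) (hn : n ≠ 0) (hrow : ∀ i j, A i j ≡ l j [ZMOD n])
    (c : ℝ) (t : Fin q → ℝ) :
    (shiftedLinearNV hq hn hrow (c, torusProj t)).values =
      range fun s : Fin n => linPoint n A c t ((s : ℕ) + 1) :=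
  congrArg UnordConf.values <| DFunLike.congr_fun
    (isQuotientMap_torusCover.lift_comp _ (factorsThrough_linConfMap hq hn hrow)) (c, t)

theorem IsLinearNV.eq_curry_shiftedLinearNV (hq : 0 < q) (hn : n ≠ 0)
    (hrow : ∀ i j, A i j ≡ l j [ZMOD n]) {f : NValuedMap (Torus q) (Torus q) n}
    (hf : IsLinearNV n A f) : f = (shiftedLinearNV hq hn hrow).curry 0 := by
  ext1 x
  obtain ⟨t, rfl⟩ := torusProj_surjective x
  apply UnordConf.values_injective
  rw [hf t, ContinuousMap.curry_apply, values_shiftedLinearNV]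
  simp only [linPoint_zero_shift]

end LinearConfiguration

theorem statement_10 {q n : ℕ} (hn : 0 < n) (A : Matrix (Fin q) (Fin q) ℤ) (l : Fin q → ℤ)
    (hrow : ∀ i j, A i j ≡ l j [ZMOD (n : ℤ)])
    (m : ℕ) (hm : 1 < m) (hmn : m ∣ n) (hml : ∀ j, (m : ℤ) ∣ l j)
    (f : NValuedMap (Torus q) (Torus q) n) (hf : IsLinearNV n A f) :
    ∃ g : Fin m → NValuedMap (Torus q) (Torus q) (n / m),
      (∀ x : Torus q, UnordConf.values (f x) = ⋃ i, UnordConf.values (g i x)) ∧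
      ∀ i : Fin m, ∃ r : ℕ, r < m ∧
        (∀ t : Fin q → ℝ,
          UnordConf.values (g i (torusProj t)) =
            Set.range fun s : Fin (n / m) =>
              torusProj fun a =>
                linLift (n / m) (Matrix.of fun i' j' => A i' j' / (m : ℤ)) ((s : ℕ) + 1) t a
                  + (r : ℝ) / (n : ℝ)) ∧
        ∀ f' : NValuedMap (Torus q) (Torus q) (n / m),
          IsLinearNV (n / m) (Matrix.of fun i' j' => A i' j' / (m : ℤ)) f' →
            (g i).Homotopic f' := by
  rcases Nat.eq_zero_or_pos q with rfl | hq
  · exact ((UnordConf.isEmpty_of_subsingleton (hm.trans_le (Nat.le_of_dvd hn hmn))).false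
      (f default)).elim
  have hmZ : (m : ℤ) ∣ n := Int.natCast_dvd_natCast.mpr hmn
  have hmA (i j) : (m : ℤ) ∣ A i j := ((hrow i j).of_dvd hmZ).dvd_iff.mpr (hml j)
  set A' : Matrix (Fin q) (Fin q) ℤ := Matrix.of fun i j => A i j / (m : ℤ)
  have hA : A = (m : ℤ) • A' := by
    ext i j
    exact (Int.mul_ediv_cancel' (hmA i j)).symm
  have hrow' (i j) : A' i j ≡ l j / m [ZMOD (n / m : ℕ)] := by
    rw [Int.natCast_div]
    exact (hrow i j).ediv_of_dvd hmZ (hmA i j) (hml j)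
  have hnm : n = m * (n / m) := (Nat.mul_div_cancel' hmn).symm
  have hn' : n / m ≠ 0 := (Nat.div_pos (Nat.le_of_dvd hn hmn) (by omega)).ne'
  refine ⟨fun i => (shiftedLinearNV hq hn' hrow').curry ((i : ℕ) / n), fun x => ?_,
    fun i => ⟨i, i.2, fun t => values_shiftedLinearNV hq hn' hrow' _ t, fun f' hf' => ?_⟩⟩
  · obtain ⟨t, rfl⟩ := torusProj_surjective x
    simp only [ContinuousMap.curry_apply, values_shiftedLinearNV hq hn' hrow', hf t,
      ← linPoint_zero_shift, range_linPoint_fin hn.ne', range_linPoint_fin hn']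
    exact range_linPoint_eq_iUnion (by omega) hn' hnm hA t
  · rw [hf'.eq_curry_shiftedLinearNV hq hn' hrow']
    exact ContinuousMap.homotopic_curry _ _ 0
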